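/- arXiv:1707.04528 — 5 statements merged into one kernel-verified Lean document; each statement's English description precedes it below -/
import Mathlib

section
/- If A is a real n×n matrix all of whose eigenvalues have absolute value strictly less than 1, then there exists a nonsingular real matrix T such that the largest singular value of T A T^{-1} is strictly less than 1. -/
/-!
Since every eigenvalue of `A` has modulus `< 1`, the spectral radius of `A` viewed as a complex
matrix is `< 1`, so by Gelfand's formula `A ^ k → 0` and some power `A ^ m` has Euclidean operator
norm `< 1`. The quadratic form `q u = ∑_{k<m} |A ^ k u|²` then satisfies
`q (A u) = q u - |u|² + |A ^ m u|² ≤ θ q u` for some `θ < 1`. Factoring the positive semidefinite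
matrix `∑_{k<m} (A ^ k)ᵀ A ^ k` as `Tᵀ T` gives `q u = |T u|²`, with `T` invertible as
`q u ≥ |u|²`; then `‖T A T⁻¹‖ ≤ √θ < 1`, and the operator norm bounds the largest singular value.
-/

open Matrix Finset

/-- Smallest real eigenvalue of a real square matrix (sInf of the set of real eigenvalues). -/
noncomputable def lamMin {n : ℕ} (M : Matrix (Fin n) (Fin n) ℝ) : ℝ :=
  sInf {x : ℝ | ∃ v : Fin n → ℝ, v ≠ 0 ∧ M *ᵥ v = x • v}

/-- Largest real eigenvalue of a real square matrix. -/
noncomputable def lamMax {n : ℕ} (M : Matrix (Fin n) (Fin n) ℝ) : ℝ :=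
  sSup {x : ℝ | ∃ v : Fin n → ℝ, v ≠ 0 ∧ M *ᵥ v = x • v}

/-- Largest singular value of a real square matrix. -/
noncomputable def sigMax {n : ℕ} (M : Matrix (Fin n) (Fin n) ℝ) : ℝ :=
  Real.sqrt (lamMax (Mᵀ * M))

/-- Smallest singular value of a real square matrix. -/
noncomputable def sigMin {n : ℕ} (M : Matrix (Fin n) (Fin n) ℝ) : ℝ :=
  Real.sqrt (lamMin (Mᵀ * M))

/-- `μ` is a (complex) eigenvalue of the real matrix `A`. -/
def IsEigC {n : ℕ} (A : Matrix (Fin n) (Fin n) ℝ) (μ : ℂ) : Prop :=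
  ∃ v : Fin n → ℂ, v ≠ 0 ∧ (A.map (fun a => (a : ℂ))) *ᵥ v = μ • v

/-- All complex eigenvalues have modulus `< 1`. -/
def SchurStable {n : ℕ} (A : Matrix (Fin n) (Fin n) ℝ) : Prop :=
  ∀ μ : ℂ, IsEigC A μ → ‖μ‖ < 1

open Filter Topology
open scoped MatrixOrder Matrix.Norms.L2Operator

theorem spectrum.tendsto_pow_nhds_zero_of_spectralRadius_lt_one {A : Type*} [NormedRing A]
    [NormedAlgebra ℂ A] [CompleteSpace A] {a : A} (ha : spectralRadius ℂ a < 1) :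
    Tendsto (a ^ ·) atTop (𝓝 0) := by
  obtain ⟨r, hρr, hr1⟩ := ENNReal.lt_iff_exists_nnreal_btwn.mp ha
  refine squeeze_zero_norm' ?_ (tendsto_pow_atTop_nhds_zero_of_lt_one r.2 (by exact_mod_cast hr1))
  filter_upwards [(pow_nnnorm_pow_one_div_tendsto_nhds_spectralRadius a).eventually_lt_const hρr,
    eventually_gt_atTop 0] with k hk hk0
  rw [one_div, ENNReal.rpow_inv_lt_iff (by positivity), ENNReal.rpow_natCast] at hk
  exact_mod_cast hk.le

namespace Matrix

variable {ι : Type*} [Fintype ι]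

lemma dotProduct_self_eq_norm_sq (v : ι → ℝ) : v ⬝ᵥ v = ‖WithLp.toLp 2 v‖ ^ 2 := by
  rw [EuclideanSpace.real_norm_sq_eq]
  simp [dotProduct, sq]

lemma dotProduct_self_nonneg (v : ι → ℝ) : 0 ≤ v ⬝ᵥ v := by
  rw [dotProduct_self_eq_norm_sq]
  positivity

variable [DecidableEq ι]

lemma dotProduct_mulVec_self_le (M : Matrix ι ι ℝ) (v : ι → ℝ) :
    (M *ᵥ v) ⬝ᵥ (M *ᵥ v) ≤ ‖M‖ ^ 2 * (v ⬝ᵥ v) := by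
  rw [dotProduct_self_eq_norm_sq, dotProduct_self_eq_norm_sq, ← mul_pow]
  gcongr
  exact M.l2_opNorm_mulVec (WithLp.toLp 2 v)

lemma l2_opNorm_le_of_dotProduct_mulVec_self_le {M : Matrix ι ι ℝ} {c : ℝ} (hc : 0 ≤ c)
    (h : ∀ v, (M *ᵥ v) ⬝ᵥ (M *ᵥ v) ≤ c ^ 2 * (v ⬝ᵥ v)) : ‖M‖ ≤ c := by
  rw [← l2_opNorm_toEuclideanCLM]
  refine ContinuousLinearMap.opNorm_le_bound _ hc fun v => ?_
  have hv := h v.ofLp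
  rw [dotProduct_self_eq_norm_sq, dotProduct_self_eq_norm_sq, ← mul_pow,
    sq_le_sq₀ (norm_nonneg _) (by positivity)] at hv
  simpa [← toEuclideanCLM_toLp] using hv

lemma exists_mulVec_dotProduct_self_eq_sum {κ : Type*} (s : Finset κ) (M : κ → Matrix ι ι ℝ) :
    ∃ B : Matrix ι ι ℝ, ∀ u, (B *ᵥ u) ⬝ᵥ (B *ᵥ u) = ∑ k ∈ s, (M k *ᵥ u) ⬝ᵥ (M k *ᵥ u) := by
  have hP := posSemidef_sum s fun k _ => posSemidef_conjTranspose_mul_self (M k)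
  obtain ⟨B, hB⟩ := CStarAlgebra.nonneg_iff_eq_star_mul_self.mp hP.nonneg
  have hquad (N : Matrix ι ι ℝ) (u : ι → ℝ) :
      (N *ᵥ u) ⬝ᵥ (N *ᵥ u) = u ⬝ᵥ ((Nᴴ * N) *ᵥ u) := by
    rw [conjTranspose_eq_transpose_of_trivial, ← mulVec_mulVec, dotProduct_mulVec u,
      vecMul_transpose]
  refine ⟨B, fun u => ?_⟩
  rw [hquad, ← star_eq_conjTranspose, ← hB, sum_mulVec, dotProduct_sum]
  simp only [hquad]

def lyapunovForm (A : Matrix ι ι ℝ) (m : ℕ) (u : ι → ℝ) : ℝ :=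
  ∑ k ∈ range m, (A ^ k *ᵥ u) ⬝ᵥ (A ^ k *ᵥ u)

lemma lyapunovForm_mulVec_add (A : Matrix ι ι ℝ) (m : ℕ) (u : ι → ℝ) :
    lyapunovForm A m (A *ᵥ u) + u ⬝ᵥ u = lyapunovForm A m u + (A ^ m *ᵥ u) ⬝ᵥ (A ^ m *ᵥ u) := by
  simp only [lyapunovForm, mulVec_mulVec, ← pow_succ]
  have hsucc' := sum_range_succ' (fun k => (A ^ k *ᵥ u) ⬝ᵥ (A ^ k *ᵥ u)) m
  have hsucc := sum_range_succ (fun k => (A ^ k *ᵥ u) ⬝ᵥ (A ^ k *ᵥ u)) m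
  simp only [pow_zero, one_mulVec] at hsucc'
  linarith

lemma dotProduct_self_le_lyapunovForm (A : Matrix ι ι ℝ) {m : ℕ} (hm : m ≠ 0) (u : ι → ℝ) :
    u ⬝ᵥ u ≤ lyapunovForm A m u := by
  simpa [lyapunovForm] using single_le_sum (f := fun k => (A ^ k *ᵥ u) ⬝ᵥ (A ^ k *ᵥ u))
    (fun k _ => dotProduct_self_nonneg _) (mem_range.mpr (Nat.pos_of_ne_zero hm))

lemma lyapunovForm_le (A : Matrix ι ι ℝ) (m : ℕ) (u : ι → ℝ) :
    lyapunovForm A m u ≤ (∑ k ∈ range m, ‖A ^ k‖ ^ 2) * (u ⬝ᵥ u) := by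
  rw [lyapunovForm, sum_mul]
  exact sum_le_sum fun k _ => dotProduct_mulVec_self_le (A ^ k) u

lemma exists_lyapunovForm_mulVec_le {A : Matrix ι ι ℝ} {m : ℕ} (hAm : ‖A ^ m‖ < 1) :
    ∃ θ, 0 ≤ θ ∧ θ < 1 ∧ ∀ u, lyapunovForm A m (A *ᵥ u) ≤ θ * lyapunovForm A m u := by
  set C := 1 + ∑ k ∈ range m, ‖A ^ k‖ ^ 2
  set δ := 1 - ‖A ^ m‖ ^ 2
  have hC : 1 ≤ C := le_add_of_nonneg_right (sum_nonneg fun k _ => by positivity)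
  have hδ0 : 0 < δ := sub_pos.mpr (pow_lt_one₀ (norm_nonneg _) hAm two_ne_zero)
  have hδ1 : δ ≤ 1 := sub_le_self _ (sq_nonneg _)
  -- `q (A u) = q u - |u|² + |A ^ m u|² ≤ q u - δ |u|² ≤ (1 - δ / C) q u`, as `q u ≤ C |u|²`
  refine ⟨1 - δ / C, sub_nonneg.mpr ((div_le_self hδ0.le hC).trans hδ1),
    sub_lt_self _ (div_pos hδ0 (by linarith)), fun u => ?_⟩
  have hshift := lyapunovForm_mulVec_add A m u
  have hAmu := dotProduct_mulVec_self_le (A ^ m) u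
  have hqC : lyapunovForm A m u ≤ C * (u ⬝ᵥ u) :=
    (lyapunovForm_le A m u).trans (by gcongr; exacts [dotProduct_self_nonneg u, by linarith])
  have hq : δ / C * lyapunovForm A m u ≤ δ * (u ⬝ᵥ u) := by
    rw [div_mul_eq_mul_div, div_le_iff₀ (by linarith)]
    nlinarith
  nlinarith

theorem exists_isUnit_det_l2_opNorm_conj_lt_one {A : Matrix ι ι ℝ} {m : ℕ} (hm : m ≠ 0)
    (hAm : ‖A ^ m‖ < 1) : ∃ T : Matrix ι ι ℝ, IsUnit T.det ∧ ‖T * A * T⁻¹‖ < 1 := by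
  obtain ⟨θ, hθ0, hθ1, hdecay⟩ := exists_lyapunovForm_mulVec_le hAm
  obtain ⟨T, hT⟩ := exists_mulVec_dotProduct_self_eq_sum (range m) (A ^ ·)
  replace hT : ∀ u, (T *ᵥ u) ⬝ᵥ (T *ᵥ u) = lyapunovForm A m u := hT
  have hTdet : IsUnit T.det := by
    rw [isUnit_iff_ne_zero, Ne, ← exists_mulVec_eq_zero_iff]
    rintro ⟨u, hu, hTu⟩
    have hle := dotProduct_self_le_lyapunovForm A hm u
    rw [← hT, hTu, zero_dotProduct] at hle
    exact hu (dotProduct_self_eq_zero.mp (hle.antisymm (dotProduct_self_nonneg u)))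
  have hTinv (v : ι → ℝ) : T *ᵥ (T⁻¹ *ᵥ v) = v := by
    rw [mulVec_mulVec, mul_nonsing_inv T hTdet, one_mulVec]
  refine ⟨T, hTdet, lt_of_le_of_lt ?_ ((Real.sqrt_lt_sqrt hθ0 hθ1).trans_eq Real.sqrt_one)⟩
  refine l2_opNorm_le_of_dotProduct_mulVec_self_le (Real.sqrt_nonneg θ) fun v => ?_
  calc ((T * A * T⁻¹) *ᵥ v) ⬝ᵥ ((T * A * T⁻¹) *ᵥ v) = lyapunovForm A m (A *ᵥ (T⁻¹ *ᵥ v)) := by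
        rw [← mulVec_mulVec, ← mulVec_mulVec, hT]
    _ ≤ θ * lyapunovForm A m (T⁻¹ *ᵥ v) := hdecay _
    _ = √θ ^ 2 * (v ⬝ᵥ v) := by rw [← hT, hTinv, Real.sq_sqrt hθ0]

end Matrix

lemma isEigC_iff_mem_spectrum {n : ℕ} {A : Matrix (Fin n) (Fin n) ℝ} {μ : ℂ} :
    IsEigC A μ ↔ μ ∈ spectrum ℂ (A.map Complex.ofReal) := by
  rw [← spectrum_toLin', ← Module.End.hasEigenvalue_iff_mem_spectrum,
    Module.End.hasEigenvalue_iff, Submodule.ne_bot_iff]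
  simp only [Module.End.mem_eigenspace_iff, toLin'_apply, IsEigC]
  exact ⟨fun ⟨v, hv, hAv⟩ => ⟨v, hAv, hv⟩, fun ⟨v, hAv, hv⟩ => ⟨v, hv, hAv⟩⟩

lemma SchurStable.spectralRadius_lt_one {n : ℕ} {A : Matrix (Fin n) (Fin n) ℝ}
    (h : SchurStable A) : spectralRadius ℂ (A.map Complex.ofReal) < 1 := by
  rcases (spectrum ℂ (A.map Complex.ofReal)).eq_empty_or_nonempty with hempty | hne
  · simp [spectralRadius, hempty]
  · obtain ⟨μ, hμ, hρ⟩ := spectrum.exists_nnnorm_eq_spectralRadius_of_nonempty hne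
    rw [← hρ]
    exact_mod_cast h μ (isEigC_iff_mem_spectrum.mpr hμ)

lemma SchurStable.tendsto_pow_nhds_zero {n : ℕ} {A : Matrix (Fin n) (Fin n) ℝ}
    (h : SchurStable A) : Tendsto (A ^ ·) atTop (𝓝 0) := by
  have hc := spectrum.tendsto_pow_nhds_zero_of_spectralRadius_lt_one h.spectralRadius_lt_one
  have hre := ((continuous_id.matrix_map Complex.continuous_re).tendsto 0).comp hc
  have hpow (k : ℕ) : A.map Complex.ofReal ^ k = (A ^ k).map Complex.ofReal :=
    (map_pow (Complex.ofRealHom.mapMatrix (m := Fin n)) A k).symm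
  simpa [Function.comp_def, hpow] using hre

lemma sigMax_le_l2_opNorm {n : ℕ} (M : Matrix (Fin n) (Fin n) ℝ) : sigMax M ≤ ‖M‖ := by
  rw [sigMax, lamMax, Real.sqrt_le_left (norm_nonneg M)]
  refine Real.sSup_le ?_ (by positivity)
  rintro x ⟨v, hv, hMv⟩
  have hvv : 0 < v ⬝ᵥ v :=
    (dotProduct_self_nonneg v).lt_of_ne (Ne.symm (dotProduct_self_eq_zero.not.mpr hv))
  refine le_of_mul_le_mul_right ?_ hvv
  calc x * (v ⬝ᵥ v) = v ⬝ᵥ ((Mᵀ * M) *ᵥ v) := by rw [hMv, dotProduct_smul, smul_eq_mul]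
    _ = (M *ᵥ v) ⬝ᵥ (M *ᵥ v) := by rw [← mulVec_mulVec, dotProduct_mulVec, vecMul_transpose]
    _ ≤ ‖M‖ ^ 2 * (v ⬝ᵥ v) := dotProduct_mulVec_self_le M v

theorem stmt3 {n : ℕ} (A : Matrix (Fin n) (Fin n) ℝ) (h : SchurStable A) :
    ∃ T : Matrix (Fin n) (Fin n) ℝ, IsUnit T.det ∧ sigMax (T * A * T⁻¹) < 1 := by
  obtain ⟨m, hAm, hm⟩ := ((h.tendsto_pow_nhds_zero.norm.eventually_lt_const
    (by simp : ‖(0 : Matrix (Fin n) (Fin n) ℝ)‖ < 1)).and (eventually_ne_atTop 0)).exists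
  obtain ⟨T, hT, hTAT⟩ := exists_isUnit_det_l2_opNorm_conj_lt_one hm hAm
  exact ⟨T, hT, (sigMax_le_l2_opNorm _).trans_lt hTAT⟩
end

section
/- Let A be a real n×n matrix, T a nonsingular matrix with σ_1(T A T^{-1}) < 1, and Q a positive definite matrix. If P is a positive semidefinite solution of the Lyapunov equation P = AᵀPA + Q, then tr(P) ≤ (σ_1(T)²/σ_n(T)²) · tr(Q)/(1 − σ_1(T A T^{-1})²). -/
open Matrix Finset

/-!
Conjugating by `T` turns the equation into `P' = Bᵀ P' B + Q'` with `B = T A T⁻¹`,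
`P' = T⁻ᵀ P T⁻¹` and `Q' = T⁻ᵀ Q T⁻¹`. For `M ⪰ 0` one has `tr (Cᵀ M C) ≤ σ₁(C)² tr M`, so taking
traces gives `tr P' ≤ σ₁(B)² tr P' + tr Q'`, and undoing the conjugation costs the factors
`σ₁(T)²` and `σₙ(T)⁻²`. The singular value bounds are expressed in the Loewner order, where
`σ₁(C)²` bounds `C Cᵀ` as well as `Cᵀ C` because the two products share their nonzero spectrum.
-/

open scoped MatrixOrder

section LoewnerOrder

variable {ι : Type*} [Fintype ι]

lemma posSemidef_transpose_mul_self (C : Matrix ι ι ℝ) : (Cᵀ * C).PosSemidef := by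
  simpa using posSemidef_conjTranspose_mul_self C

lemma trace_mono {M N : Matrix ι ι ℝ} (h : M ≤ N) : M.trace ≤ N.trace :=
  OrderHomClass.mono (tracePositiveLinearMap ι ℝ ℝ) h

variable [DecidableEq ι]

lemma mul_transpose_le_of_transpose_mul_le {C : Matrix ι ι ℝ} {c : ℝ} (hc : 0 ≤ c)
    (h : Cᵀ * C ≤ algebraMap ℝ _ c) : C * Cᵀ ≤ algebraMap ℝ _ c := by
  have hCCt : IsSelfAdjoint (C * Cᵀ) := by
    simpa using (posSemidef_transpose_mul_self Cᵀ).isHermitian.isSelfAdjoint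
  rw [le_algebraMap_iff_spectrum_le (posSemidef_transpose_mul_self C).isHermitian.isSelfAdjoint]
    at h
  rw [le_algebraMap_iff_spectrum_le hCCt]
  intro x hx
  rcases eq_or_ne x 0 with rfl | hx0
  · exact hc
  · have hx' : x ∈ spectrum ℝ (Cᵀ * C) \ {0} := by
      rw [← spectrum.nonzero_mul_comm]
      exact ⟨hx, hx0⟩
    exact h x hx'.1

lemma trace_transpose_mul_mul_le {M C : Matrix ι ι ℝ} {c : ℝ} (hM : 0 ≤ M)
    (hC : C * Cᵀ ≤ algebraMap ℝ _ c) : (Cᵀ * M * C).trace ≤ c * M.trace := by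
  set R := CFC.sqrt M
  have hR : IsSelfAdjoint R := .of_nonneg (CFC.sqrt_nonneg M)
  have hRR : R * R = M := CFC.sqrt_mul_sqrt_self M hM
  calc (Cᵀ * M * C).trace = (R * (C * Cᵀ) * R).trace := by
        rw [← hRR, trace_mul_cycle, Matrix.mul_assoc, ← trace_mul_cycle]
        simp only [Matrix.mul_assoc]
    _ ≤ (R * algebraMap ℝ _ c * R).trace :=
        trace_mono (hR.conjugate_le_conjugate hC)
    _ = c * M.trace := by
        rw [Algebra.algebraMap_eq_smul_one, Matrix.mul_smul, Matrix.mul_one, Matrix.smul_mul, hRR,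
          trace_smul, smul_eq_mul]

lemma trace_le_of_eq_transpose_mul_mul_add {P Q B : Matrix ι ι ℝ} {c : ℝ}
    (hP : 0 ≤ P) (hB : B * Bᵀ ≤ algebraMap ℝ _ c) (hc : c < 1) (heq : P = Bᵀ * P * B + Q) :
    P.trace ≤ Q.trace / (1 - c) := by
  have hsplit : P.trace = (Bᵀ * P * B).trace + Q.trace := by
    rw [← trace_add, ← heq]
  have hBPB := trace_transpose_mul_mul_le hP hB
  rw [le_div_iff₀ (sub_pos.2 hc)]
  nlinarith

lemma eq_transpose_mul_mul_add_conj {A P Q T : Matrix ι ι ℝ} (hT : IsUnit T.det)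
    (heq : P = Aᵀ * P * A + Q) :
    (T⁻¹)ᵀ * P * T⁻¹ =
      (T * A * T⁻¹)ᵀ * ((T⁻¹)ᵀ * P * T⁻¹) * (T * A * T⁻¹) + (T⁻¹)ᵀ * Q * T⁻¹ := by
  have hTT : Tᵀ * (T⁻¹)ᵀ = 1 := by rw [← transpose_mul, nonsing_inv_mul T hT, transpose_one]
  conv_lhs => rw [heq]
  simp only [transpose_mul, Matrix.mul_add, Matrix.add_mul, Matrix.mul_assoc]
  rw [← Matrix.mul_assoc Tᵀ, hTT, Matrix.one_mul, ← Matrix.mul_assoc T⁻¹ T, nonsing_inv_mul T hT,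
    Matrix.one_mul]

end LoewnerOrder

section SingularValues

variable {n : ℕ}

lemma eigenvalueSet_eq_spectrum (M : Matrix (Fin n) (Fin n) ℝ) :
    {x : ℝ | ∃ v : Fin n → ℝ, v ≠ 0 ∧ M *ᵥ v = x • v} = spectrum ℝ M := by
  ext x
  rw [Set.mem_ofPred_eq, spectrum.mem_iff, isUnit_iff_isUnit_det, isUnit_iff_ne_zero, not_not,
    ← exists_mulVec_eq_zero_iff]
  simp only [Algebra.algebraMap_eq_smul_one, sub_mulVec, smul_mulVec, one_mulVec, sub_eq_zero,
    eq_comm]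

lemma lamMax_eq_sSup_spectrum (M : Matrix (Fin n) (Fin n) ℝ) :
    lamMax M = sSup (spectrum ℝ M) := by
  rw [lamMax, eigenvalueSet_eq_spectrum]

lemma lamMin_eq_sInf_spectrum (M : Matrix (Fin n) (Fin n) ℝ) :
    lamMin M = sInf (spectrum ℝ M) := by
  rw [lamMin, eigenvalueSet_eq_spectrum]

lemma Matrix.IsHermitian.le_lamMax {S : Matrix (Fin n) (Fin n) ℝ} (hS : S.IsHermitian) :
    S ≤ algebraMap ℝ _ (lamMax S) := by
  rw [le_algebraMap_iff_spectrum_le hS.isSelfAdjoint, lamMax_eq_sSup_spectrum]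
  exact fun x hx => le_csSup finite_real_spectrum.bddAbove hx

lemma Matrix.IsHermitian.lamMin_le {S : Matrix (Fin n) (Fin n) ℝ} (hS : S.IsHermitian) :
    algebraMap ℝ _ (lamMin S) ≤ S := by
  rw [algebraMap_le_iff_le_spectrum hS.isSelfAdjoint, lamMin_eq_sInf_spectrum]
  exact fun x hx => csInf_le finite_real_spectrum.bddBelow hx

lemma sigMax_sq (C : Matrix (Fin n) (Fin n) ℝ) : sigMax C ^ 2 = lamMax (Cᵀ * C) := by
  refine Real.sq_sqrt ?_
  rw [lamMax_eq_sSup_spectrum]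
  exact Real.sSup_nonneg fun x hx =>
    spectrum_nonneg_of_nonneg (posSemidef_transpose_mul_self C).nonneg hx

lemma sigMin_sq (C : Matrix (Fin n) (Fin n) ℝ) : sigMin C ^ 2 = lamMin (Cᵀ * C) := by
  refine Real.sq_sqrt ?_
  rw [lamMin_eq_sInf_spectrum]
  exact Real.sInf_nonneg fun x hx =>
    spectrum_nonneg_of_nonneg (posSemidef_transpose_mul_self C).nonneg hx

lemma sigMin_pos [Nonempty (Fin n)] {T : Matrix (Fin n) (Fin n) ℝ} (hT : IsUnit T.det) :
    0 < sigMin T := by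
  have hne : (spectrum ℝ (Tᵀ * T)).Nonempty := by
    rw [(posSemidef_transpose_mul_self T).isHermitian.spectrum_real_eq_range_eigenvalues]
    exact Set.range_nonempty _
  have hmem := hne.csInf_mem finite_real_spectrum
  have hunit : IsUnit (Tᵀ * T) := by
    rw [isUnit_iff_isUnit_det, det_mul, det_transpose]
    exact hT.mul hT
  rw [sigMin, Real.sqrt_pos, lamMin_eq_sInf_spectrum]
  refine lt_of_le_of_ne (spectrum_nonneg_of_nonneg (posSemidef_transpose_mul_self T).nonneg hmem) ?_
  intro h
  exact (spectrum.zero_notMem_iff ℝ).2 hunit (h ▸ hmem)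

lemma mul_transpose_le_sigMax_sq (C : Matrix (Fin n) (Fin n) ℝ) :
    C * Cᵀ ≤ algebraMap ℝ _ (sigMax C ^ 2) := by
  refine mul_transpose_le_of_transpose_mul_le (sq_nonneg _) ?_
  rw [sigMax_sq]
  exact (posSemidef_transpose_mul_self C).isHermitian.le_lamMax

lemma inv_mul_transpose_inv_le [Nonempty (Fin n)] {T : Matrix (Fin n) (Fin n) ℝ}
    (hT : IsUnit T.det) : T⁻¹ * (T⁻¹)ᵀ ≤ algebraMap ℝ _ (sigMin T ^ 2)⁻¹ := by
  have hμ : 0 < sigMin T ^ 2 := pow_pos (sigMin_pos hT) 2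
  refine mul_transpose_le_of_transpose_mul_le (by positivity) ?_
  have hlow : algebraMap ℝ _ (sigMin T ^ 2) ≤ Tᵀ * T := by
    rw [sigMin_sq]
    exact (posSemidef_transpose_mul_self T).isHermitian.lamMin_le
  have hconj := star_left_conjugate_le_conjugate hlow T⁻¹
  have hid : (T⁻¹)ᵀ * (Tᵀ * T) * T⁻¹ = 1 := by
    rw [← Matrix.mul_assoc, ← transpose_mul, mul_nonsing_inv T hT, transpose_one, Matrix.one_mul,
      mul_nonsing_inv T hT]
  rw [star_eq_conjTranspose, conjTranspose_eq_transpose_of_trivial, hid,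
    Algebra.algebraMap_eq_smul_one, Matrix.mul_smul, Matrix.mul_one, Matrix.smul_mul] at hconj
  have hscaled := smul_le_smul_of_nonneg_left hconj (inv_nonneg.2 hμ.le)
  rwa [smul_smul, inv_mul_cancel₀ hμ.ne', one_smul, ← Algebra.algebraMap_eq_smul_one] at hscaled

end SingularValues

theorem stmt4 {n : ℕ} (A T P Q : Matrix (Fin n) (Fin n) ℝ)
    (hT : IsUnit T.det) (hTA : sigMax (T * A * T⁻¹) < 1)
    (hQ : Q.PosDef) (hP : P.PosSemidef) (heq : P = Aᵀ * P * A + Q) :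
    P.trace ≤ (sigMax T ^ 2 / sigMin T ^ 2) * (Q.trace / (1 - sigMax (T * A * T⁻¹) ^ 2)) := by
  rcases isEmpty_or_nonempty (Fin n) with hn | hn
  · simp [Matrix.trace]
  set B := T * A * T⁻¹
  set P' := (T⁻¹)ᵀ * P * T⁻¹
  have hP' : 0 ≤ P' := by simpa using (hP.conjTranspose_mul_mul_same T⁻¹).nonneg
  have hPT : P = Tᵀ * P' * T := by
    have hTT : Tᵀ * (T⁻¹)ᵀ = 1 := by rw [← transpose_mul, nonsing_inv_mul T hT, transpose_one]
    simp only [P', Matrix.mul_assoc]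
    rw [nonsing_inv_mul T hT, Matrix.mul_one, ← Matrix.mul_assoc, hTT, Matrix.one_mul]
  have hB : sigMax B ^ 2 < 1 := pow_lt_one₀ (Real.sqrt_nonneg _) hTA two_ne_zero
  calc P.trace = (Tᵀ * P' * T).trace := by rw [← hPT]
    _ ≤ sigMax T ^ 2 * P'.trace := trace_transpose_mul_mul_le hP' (mul_transpose_le_sigMax_sq T)
    _ ≤ sigMax T ^ 2 * (((T⁻¹)ᵀ * Q * T⁻¹).trace / (1 - sigMax B ^ 2)) := by
        gcongr
        exact trace_le_of_eq_transpose_mul_mul_add hP' (mul_transpose_le_sigMax_sq B) hB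
          (eq_transpose_mul_mul_add_conj hT heq)
    _ ≤ sigMax T ^ 2 * ((sigMin T ^ 2)⁻¹ * Q.trace / (1 - sigMax B ^ 2)) := by
        gcongr
        simpa using trace_transpose_mul_mul_le hQ.posSemidef.nonneg (inv_mul_transpose_inv_le hT)
    _ = (sigMax T ^ 2 / sigMin T ^ 2) * (Q.trace / (1 - sigMax B ^ 2)) := by ring
end

section
/- If P is a positive semidefinite solution of the discrete algebraic Riccati equation P = Q + AᵀPA − AᵀPB(R + BᵀPB)^{-1}BᵀPA with Q positive definite and R positive definite, then P ⪰ Aᵀ(Q^{-1} + B R^{-1} Bᵀ)^{-1} A + Q (Loewner order). -/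
open Matrix Finset

/-! Write `M = P - P B (R + Bᵀ P B)⁻¹ Bᵀ P`, so that the Riccati equation says `P = Q + Aᵀ M A`.
Completing the square, `M = (1 - B K)ᵀ P (1 - B K) + Kᵀ R K` with `K = (R + Bᵀ P B)⁻¹ Bᵀ P`,
so `M ⪰ 0` and hence `P ⪰ Q ≻ 0`. The Woodbury identity then gives
`M = (P⁻¹ + B R⁻¹ Bᵀ)⁻¹`, and since inversion reverses the Loewner order on positive definite
matrices, `Q ⪯ P` implies `(Q⁻¹ + B R⁻¹ Bᵀ)⁻¹ ⪯ M`; conjugating by `A` gives the claim. -/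

open scoped MatrixOrder ComplexOrder

namespace Matrix

variable {𝕜 ι κ : Type*} [RCLike 𝕜] [Fintype ι] [DecidableEq ι] [Fintype κ] [DecidableEq κ]

lemma PosDef.inv_anti {X Y : Matrix ι ι 𝕜} (hX : X.PosDef) (hXY : X ≤ Y) : Y⁻¹ ≤ X⁻¹ := by
  obtain ⟨L, hL⟩ := CStarAlgebra.nonneg_iff_eq_star_mul_self.mp (sub_nonneg.mpr hXY)
  have hY : Y = X + Lᴴ * 1 * L := by rw [mul_one, ← star_eq_conjTranspose, ← hL]; abel
  have hS : (1 + L * X⁻¹ * Lᴴ).PosDef :=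
    PosDef.one.add_posSemidef (hX.inv.posSemidef.mul_mul_conjTranspose_same L)
  rw [le_iff, hY, add_mul_mul_inv_eq_sub X Lᴴ 1 L hX.isUnit isUnit_one (by simpa using hS.isUnit)]
  convert hS.inv.posSemidef.conjTranspose_mul_mul_same (L * X⁻¹) using 1
  simp [conjTranspose_nonsing_inv, hX.isHermitian.eq, mul_assoc]

lemma PosDef.inv_inv_add_le_inv_inv_add {P Q C : Matrix ι ι 𝕜} (hQ : Q.PosDef)
    (hC : C.PosSemidef) (hQP : Q ≤ P) : (Q⁻¹ + C)⁻¹ ≤ (P⁻¹ + C)⁻¹ := by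
  have hP : P.PosDef := by simpa using hQ.add_posSemidef hQP
  exact (hP.inv.add_posSemidef hC).inv_anti (add_le_add_left (hQ.inv_anti hQP) C)

noncomputable def kalmanUpdate (P : Matrix ι ι 𝕜) (B : Matrix ι κ 𝕜) (R : Matrix κ κ 𝕜) :
    Matrix ι ι 𝕜 :=
  P - P * B * (R + Bᴴ * P * B)⁻¹ * Bᴴ * P

lemma kalmanUpdate_posSemidef {P : Matrix ι ι 𝕜} {R : Matrix κ κ 𝕜} (B : Matrix ι κ 𝕜)
    (hP : P.PosSemidef) (hR : R.PosDef) : (kalmanUpdate P B R).PosSemidef := by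
  set S := R + Bᴴ * P * B
  have hS : S.PosDef := hR.add_posSemidef (hP.conjTranspose_mul_mul_same B)
  set K := S⁻¹ * (Bᴴ * P)
  have hSK : S * K = Bᴴ * P :=
    mul_nonsing_inv_cancel_left _ _ ((isUnit_iff_isUnit_det S).mp hS.isUnit)
  have hupd : kalmanUpdate P B R = P - P * (B * K) := by
    simp only [kalmanUpdate, K, S, Matrix.mul_assoc]
  have hKRK : Kᴴ * R * K = Kᴴ * (S * K) - Kᴴ * Bᴴ * (P * (B * K)) := by
    simp only [S, Matrix.add_mul, Matrix.mul_add, Matrix.mul_assoc, add_sub_cancel_right]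
  have hsquare : kalmanUpdate P B R = (1 - B * K)ᴴ * P * (1 - B * K) + Kᴴ * R * K := by
    rw [hupd, hKRK, hSK]
    simp only [conjTranspose_sub, conjTranspose_one, conjTranspose_mul, Matrix.mul_sub,
      Matrix.sub_mul, Matrix.one_mul, Matrix.mul_one, Matrix.mul_assoc]
    abel
  rw [hsquare]
  exact (hP.conjTranspose_mul_mul_same _).add (hR.posSemidef.conjTranspose_mul_mul_same K)

lemma kalmanUpdate_eq_inv {P : Matrix ι ι 𝕜} {R : Matrix κ κ 𝕜} (B : Matrix ι κ 𝕜)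
    (hP : P.PosDef) (hR : R.PosDef) : kalmanUpdate P B R = (P⁻¹ + B * R⁻¹ * Bᴴ)⁻¹ := by
  have hS : (R + Bᴴ * P * B).PosDef :=
    hR.add_posSemidef (hP.posSemidef.conjTranspose_mul_mul_same B)
  have hPP : P⁻¹⁻¹ = P := nonsing_inv_nonsing_inv _ ((isUnit_iff_isUnit_det P).mp hP.isUnit)
  have hRR : R⁻¹⁻¹ = R := nonsing_inv_nonsing_inv _ ((isUnit_iff_isUnit_det R).mp hR.isUnit)
  have hWoodbury : IsUnit (R⁻¹⁻¹ + Bᴴ * P⁻¹⁻¹ * B) := by rw [hPP, hRR]; exact hS.isUnit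
  rw [add_mul_mul_inv_eq_sub _ _ _ _ hP.inv.isUnit hR.inv.isUnit hWoodbury, hPP, hRR]
  rfl

end Matrix

theorem stmt7 {n m : ℕ} (A P Q : Matrix (Fin n) (Fin n) ℝ)
    (B : Matrix (Fin n) (Fin m) ℝ) (R : Matrix (Fin m) (Fin m) ℝ)
    (hQ : Q.PosDef) (hR : R.PosDef) (hP : P.PosSemidef)
    (heq : P = Q + Aᵀ * P * A - Aᵀ * P * B * (R + Bᵀ * P * B)⁻¹ * Bᵀ * P * A) :
    (P - (Aᵀ * (Q⁻¹ + B * R⁻¹ * Bᵀ)⁻¹ * A + Q)).PosSemidef := by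
  simp only [← conjTranspose_eq_transpose_of_trivial] at heq ⊢
  have hPM : P = Q + Aᴴ * kalmanUpdate P B R * A := by
    nth_rw 1 [heq]
    simp only [kalmanUpdate, mul_sub, sub_mul, Matrix.mul_assoc]
    abel
  have hQP : Q ≤ P := by
    rw [le_iff, hPM, add_sub_cancel_left]
    exact (kalmanUpdate_posSemidef B hP hR).conjTranspose_mul_mul_same A
  have hPd : P.PosDef := by simpa using hQ.add_posSemidef hQP
  have hBRB : (B * R⁻¹ * Bᴴ).PosSemidef := hR.inv.posSemidef.mul_mul_conjTranspose_same B
  have hmono : (Q⁻¹ + B * R⁻¹ * Bᴴ)⁻¹ ≤ kalmanUpdate P B R :=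
    kalmanUpdate_eq_inv B hPd hR ▸ hQ.inv_inv_add_le_inv_inv_add hBRB hQP
  calc Aᴴ * (Q⁻¹ + B * R⁻¹ * Bᴴ)⁻¹ * A + Q ≤ Aᴴ * kalmanUpdate P B R * A + Q :=
        add_le_add_left (star_left_conjugate_le_conjugate hmono A) Q
    _ = P := by rw [add_comm]; exact hPM.symm
end

section
/- Let A be a Schur-stable normal real n×n matrix (all eigenvalues of absolute value < 1, AᵀA = AAᵀ), Q positive definite, R positive definite, B ∈ R^{n×m}. Let P_worst solve the Lyapunov equation P = AᵀPA + Q and P_opt be any positive semidefinite solution of the Riccati equation P = Q + AᵀPA − AᵀPB(R + BᵀPB)^{-1}BᵀPA. Then tr(P_worst)/tr(P_opt) ≤ 1/(1 − λ_1(A)²), where λ_1(A) is the spectral radius of A. -/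
/-!
For normal `A`, the matrices `A` and `A Aᵀ` commute, so every eigenvector of `A Aᵀ` can be
replaced by a common eigenvector; normality then identifies each eigenvalue of `A Aᵀ` with some
`|μ|²`, `μ` an eigenvalue of `A`, whence `A Aᵀ ≤ ρ² I`. Taking traces in the Lyapunov equation
gives `tr P_worst ≤ ρ² tr P_worst + tr Q`. The Riccati equation rewrites as
`P_opt - Q = Aᵀ (P_opt - P_opt B (R + Bᵀ P_opt B)⁻¹ Bᵀ P_opt) A`, and the middle factor is a Schur
complement in a positive semidefinite block matrix, so `Q ≤ P_opt`. Together,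
`tr P_worst ≤ tr Q / (1 - ρ²) ≤ tr P_opt / (1 - ρ²)`.
-/

open Matrix Finset

open scoped MatrixOrder

namespace Matrix

open scoped ComplexOrder in
theorem eq_norm_sq_of_mul_conjTranspose_mulVec {𝕜 ι : Type*} [RCLike 𝕜] [Fintype ι]
    {N : Matrix ι ι 𝕜} (hN : Nᴴ * N = N * Nᴴ) {x : ι → 𝕜} (hx : x ≠ 0) {μ c : 𝕜}
    (hNx : N *ᵥ x = μ • x) (hc : (N * Nᴴ) *ᵥ x = c • x) : c = (‖μ‖ ^ 2 : ℝ) := by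
  have hxx : star x ⬝ᵥ x ≠ 0 := dotProduct_star_self_eq_zero.not.mpr hx
  have key : c * (star x ⬝ᵥ x) = (‖μ‖ ^ 2 : ℝ) * (star x ⬝ᵥ x) := calc
    c * (star x ⬝ᵥ x) = star x ⬝ᵥ ((Nᴴ * N) *ᵥ x) := by
      rw [hN, hc, dotProduct_smul, smul_eq_mul]
    _ = star (N *ᵥ x) ⬝ᵥ (N *ᵥ x) := by
      rw [← mulVec_mulVec, dotProduct_mulVec, star_mulVec]
    _ = (‖μ‖ ^ 2 : ℝ) * (star x ⬝ᵥ x) := by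
      rw [hNx, star_smul, smul_dotProduct, dotProduct_smul, smul_smul, smul_eq_mul,
        RCLike.star_def, RCLike.conj_mul, RCLike.ofReal_pow]
  exact mul_right_cancel₀ hxx key

theorem exists_common_eigenvector_of_commute {K ι : Type*} [Field K] [IsAlgClosed K]
    [Fintype ι] [DecidableEq ι] {M N : Matrix ι ι K} (hMN : Commute M N) {c : K} {v : ι → K}
    (hv : v ≠ 0) (hMv : M *ᵥ v = c • v) :
    ∃ x : ι → K, x ≠ 0 ∧ M *ᵥ x = c • x ∧ ∃ μ : K, N *ᵥ x = μ • x := by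
  set p := Module.End.eigenspace (toLin' M) c
  have hmaps : ∀ x ∈ p, toLin' N x ∈ p :=
    Module.End.mapsTo_genEigenspace_of_comm (hMN.map (toLinAlgEquiv' (R := K) (n := ι))) c 1
  have : Nontrivial p := ⟨⟨⟨v, by simpa [p] using hMv⟩, 0, by simpa using hv⟩⟩
  obtain ⟨μ, hμ⟩ := Module.End.exists_eigenvalue ((toLin' N).restrict hmaps)
  obtain ⟨w, hwμ, hw0⟩ := hμ.exists_hasEigenvector
  refine ⟨w, by simpa using hw0, by simpa [p] using Module.End.mem_eigenspace_iff.mp w.2, μ, ?_⟩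
  simpa [Subtype.ext_iff] using Module.End.mem_eigenspace_iff.mp hwμ

end Matrix

theorem exists_isEigC_norm_sq_eq {n : ℕ} {A : Matrix (Fin n) (Fin n) ℝ}
    (hA : Aᵀ * A = A * Aᵀ) {c : ℝ} {v : Fin n → ℝ} (hv : v ≠ 0) (hAv : (A * Aᵀ) *ᵥ v = c • v) :
    ∃ μ : ℂ, IsEigC A μ ∧ ‖μ‖ ^ 2 = c := by
  set f := Complex.ofRealHom
  set Ac := A.map f
  have hAcH : Acᴴ = Aᵀ.map f := by
    ext i j; simp [Ac, f]
  have hnormal : Acᴴ * Ac = Ac * Acᴴ := by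
    simpa only [hAcH, Ac, ← Matrix.map_mul] using congrArg (Matrix.map · f) hA
  have hcomm : Commute (Ac * Acᴴ) Ac := by
    rw [Commute, SemiconjBy, mul_assoc, hnormal]
  have hvc : f ∘ v ≠ 0 := fun h => hv (funext fun i => by simpa [f] using congrFun h i)
  have hAvc : (Ac * Acᴴ) *ᵥ (f ∘ v) = (c : ℂ) • (f ∘ v) := by
    ext i
    simpa [hAcH, Ac, ← Matrix.map_mul, RingHom.map_mulVec, f] using congrArg f (congrFun hAv i)
  obtain ⟨x, hx, hMx, μ, hAx⟩ := exists_common_eigenvector_of_commute hcomm hvc hAvc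
  refine ⟨μ, ⟨x, hx, hAx⟩, Complex.ofReal_injective ?_⟩
  exact (eq_norm_sq_of_mul_conjTranspose_mulVec hnormal hx hAx hMx).symm

theorem mul_transpose_le_of_forall_isEigC_norm_le {n : ℕ} {A : Matrix (Fin n) (Fin n) ℝ}
    (hA : Aᵀ * A = A * Aᵀ) {ρ : ℝ} (hρ : ∀ μ : ℂ, IsEigC A μ → ‖μ‖ ≤ ρ) :
    A * Aᵀ ≤ ρ ^ 2 • (1 : Matrix (Fin n) (Fin n) ℝ) := by
  have hsymm : (A * Aᵀ).IsHermitian := by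
    simpa [conjTranspose_eq_transpose_of_trivial] using isHermitian_mul_conjTranspose_self A
  rw [← Algebra.algebraMap_eq_smul_one, le_algebraMap_iff_spectrum_le hsymm]
  intro c hc
  rw [← spectrum_toLin', ← Module.End.hasEigenvalue_iff_mem_spectrum] at hc
  obtain ⟨v, hv⟩ := hc.exists_hasEigenvector
  obtain ⟨μ, hμ, rfl⟩ := exists_isEigC_norm_sq_eq hA hv.2 (by simpa using hv.apply_eq_smul)
  exact pow_le_pow_left₀ (norm_nonneg μ) (hρ μ hμ) 2

namespace Matrix

theorem trace_transpose_mul_mul_le {ι : Type*} [Fintype ι] [DecidableEq ι] {A P : Matrix ι ι ℝ}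
    (hP : P.PosSemidef) {c : ℝ} (hA : A * Aᵀ ≤ c • 1) : (Aᵀ * P * A).trace ≤ c * P.trace := by
  set L := CFC.sqrt P
  have hL : star L = L := (CFC.sqrt_nonneg P).isSelfAdjoint.star_eq
  have hLL : L * L = P := CFC.sqrt_mul_sqrt_self P hP.nonneg
  have h := star_left_conjugate_le_conjugate hA L
  rw [hL] at h
  calc (Aᵀ * P * A).trace = (Aᵀ * L * (L * A)).trace := by rw [← hLL]; simp only [mul_assoc]
    _ = (L * A * (Aᵀ * L)).trace := trace_mul_comm _ _
    _ = (L * (A * Aᵀ) * L).trace := by simp only [mul_assoc]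
    _ ≤ (L * (c • 1) * L).trace := (tracePositiveLinearMap ι ℝ ℝ).monotone h
    _ = c * P.trace := by rw [mul_smul_comm, mul_one, smul_mul_assoc, hLL, trace_smul, smul_eq_mul]

theorem one_sub_mul_trace_le_of_lyapunov {ι : Type*} [Fintype ι] [DecidableEq ι]
    {P Q A : Matrix ι ι ℝ} (hP : P.PosSemidef) {c : ℝ} (hA : A * Aᵀ ≤ c • 1)
    (h : P = Aᵀ * P * A + Q) : (1 - c) * P.trace ≤ Q.trace := by
  have htr : P.trace = (Aᵀ * P * A).trace + Q.trace := by
    conv_lhs => rw [h]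
    exact trace_add _ _
  linarith [trace_transpose_mul_mul_le hP hA]

open scoped ComplexOrder in
theorem PosSemidef.sub_mul_mul_inv_mul_mul {𝕜 m n : Type*} [RCLike 𝕜] [Fintype m] [Fintype n]
    [DecidableEq m] [DecidableEq n] {P : Matrix n n 𝕜} (hP : P.PosSemidef) (B : Matrix n m 𝕜)
    {R : Matrix m m 𝕜} (hR : R.PosDef) :
    (P - P * B * (R + Bᴴ * P * B)⁻¹ * Bᴴ * P).PosSemidef := by
  have hS : (R + Bᴴ * P * B).PosDef := hR.add_posSemidef (hP.conjTranspose_mul_mul_same B)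
  have := hR.isUnit.invertible
  have := hS.isUnit.invertible
  have hD : (fromBlocks R 0 0 P).PosSemidef := by
    simpa using (PosDef.fromBlocks₁₁ 0 P hR).2 (by simpa using hP)
  set K : Matrix (m ⊕ n) (m ⊕ n) 𝕜 := fromBlocks 1 0 B 1
  have hK : Kᴴ * fromBlocks R 0 0 P * K = fromBlocks (R + Bᴴ * P * B) (Bᴴ * P) (Bᴴ * P)ᴴ P := by
    simp [K, fromBlocks_conjTranspose, fromBlocks_multiply, hP.1.eq]
  have := (PosDef.fromBlocks₁₁ (Bᴴ * P) P hS).1 (hK ▸ hD.conjTranspose_mul_mul_same K)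
  simpa only [conjTranspose_mul, conjTranspose_conjTranspose, hP.1.eq, Matrix.mul_assoc] using this

theorem le_of_riccati {m n : Type*} [Fintype m] [Fintype n] [DecidableEq m] [DecidableEq n]
    {P Q A : Matrix n n ℝ} {B : Matrix n m ℝ} {R : Matrix m m ℝ} (hP : P.PosSemidef)
    (hR : R.PosDef) (h : P = Q + Aᵀ * P * A - Aᵀ * P * B * (R + Bᵀ * P * B)⁻¹ * Bᵀ * P * A) :
    Q ≤ P := by
  have hsub : P - Q = Aᵀ * (P - P * B * (R + Bᵀ * P * B)⁻¹ * Bᵀ * P) * A := by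
    nth_rewrite 1 [h]
    simp only [Matrix.mul_sub, Matrix.sub_mul, Matrix.mul_assoc]
    abel
  have hS := hP.sub_mul_mul_inv_mul_mul B hR
  simp only [conjTranspose_eq_transpose_of_trivial] at hS
  rw [le_iff, hsub]
  simpa only [conjTranspose_eq_transpose_of_trivial] using hS.conjTranspose_mul_mul_same A

end Matrix

theorem stmt16 {n m : ℕ} (hn : 0 < n) (A Q Pw Po : Matrix (Fin n) (Fin n) ℝ)
    (B : Matrix (Fin n) (Fin m) ℝ) (R : Matrix (Fin m) (Fin m) ℝ)
    (hnormal : Aᵀ * A = A * Aᵀ) (hstable : SchurStable A)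
    (hQ : Q.PosDef) (hR : R.PosDef) (hPw : Pw.PosSemidef) (hPo : Po.PosSemidef)
    (heqw : Pw = Aᵀ * Pw * A + Q)
    (heqo : Po = Q + Aᵀ * Po * A - Aᵀ * Po * B * (R + Bᵀ * Po * B)⁻¹ * Bᵀ * Po * A)
    (ρ : ℝ) (hρ : (∃ μ : ℂ, IsEigC A μ ∧ ‖μ‖ = ρ) ∧ ∀ μ : ℂ, IsEigC A μ → ‖μ‖ ≤ ρ) :
    Pw.trace / Po.trace ≤ 1 / (1 - ρ ^ 2) := by
  obtain ⟨⟨μ, hμ, rfl⟩, hbound⟩ := hρ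
  have hgap : 0 < 1 - ‖μ‖ ^ 2 :=
    sub_pos.2 (pow_lt_one₀ (norm_nonneg μ) (hstable μ hμ) two_ne_zero)
  have hQtrace : 0 < Q.trace := by
    have : Nonempty (Fin n) := ⟨⟨0, hn⟩⟩
    exact hQ.trace_pos
  have hworst := one_sub_mul_trace_le_of_lyapunov hPw
    (mul_transpose_le_of_forall_isEigC_norm_le hnormal hbound) heqw
  have hopt : Q.trace ≤ Po.trace :=
    (tracePositiveLinearMap (Fin n) ℝ ℝ).monotone (le_of_riccati hPo hR heqo)
  calc Pw.trace / Po.trace ≤ Pw.trace / Q.trace :=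
        div_le_div_of_nonneg_left hPw.trace_nonneg hQtrace hopt
    _ ≤ 1 / (1 - ‖μ‖ ^ 2) := by
        rw [div_le_div_iff₀ hQtrace hgap]
        linarith
end

section
/- Let P_1, P_2 be positive semidefinite solutions of the discrete algebraic Riccati equation P = Q_i + AᵀPA − AᵀPB(R + BᵀPB)^{-1}BᵀPA for i = 1,2 with 0 ⪯ Q_1 ⪯ Q_2, both (A, Q_i^{1/2}) detectable and (A,B) stabilizable. Then P_1 ⪯ P_2 (monotonicity of the Riccati equation solution in Q). -/
open Matrix Finset

/-- PBH detectability of the pair `(A, C)`: every eigenvector of `A` for an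
eigenvalue of modulus `≥ 1` is visible through `C`. -/
def Detectable {n p : ℕ} (A : Matrix (Fin n) (Fin n) ℝ)
    (C : Matrix (Fin p) (Fin n) ℝ) : Prop :=
  ∀ (μ : ℂ) (v : Fin n → ℂ), v ≠ 0 → (A.map (fun a => (a : ℂ))) *ᵥ v = μ • v →
    1 ≤ ‖μ‖ → (C.map (fun a => (a : ℂ))) *ᵥ v ≠ 0

/-- PBH stabilizability of the pair `(A, B)`: every left eigenvector of `A` for an
eigenvalue of modulus `≥ 1` is reachable through `B`. -/
def Stabilizable {n m : ℕ} (A : Matrix (Fin n) (Fin n) ℝ)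
    (B : Matrix (Fin n) (Fin m) ℝ) : Prop :=
  ∀ (μ : ℂ) (v : Fin n → ℂ), v ≠ 0 → (Aᵀ.map (fun a => (a : ℂ))) *ᵥ v = μ • v →
    1 ≤ ‖μ‖ → (Bᵀ.map (fun a => (a : ℂ))) *ᵥ v ≠ 0

/-- The positive semidefinite square root of a positive semidefinite matrix
(the definition of `Matrix.PosSemidef.sqrt` in the older Mathlib, since removed). -/
noncomputable def Matrix.PosSemidef.sqrt {n : Type*} [Fintype n] [DecidableEq n]
    {𝕜 : Type*} [RCLike 𝕜] [PartialOrder 𝕜] {A : Matrix n n 𝕜} (hA : A.PosSemidef) : Matrix n n 𝕜 :=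
  hA.1.eigenvectorUnitary.1 * diagonal ((↑) ∘ (Real.sqrt ∘ hA.1.eigenvalues)) *
  (star hA.1.eigenvectorUnitary : Matrix n n 𝕜)

/-!
Let `K` be the optimal gain of `P₂`. Completing the square in the Riccati equation shows that
`P₂ = Q₂ + KᵀRK + (A - BK)ᵀP₂(A - BK)`, while `P₁` satisfies the same identity with `Q₁` in place
of `Q₂`, minus the square `(K - K₁)ᵀ(R + BᵀP₁B)(K - K₁)` of its deviation from its own optimal gain
`K₁`. Hence `Δ = P₂ - P₁` solves a Lyapunov equation `Δ = GᵀΔG + M` with `G = A - BK` and `M ⪰ 0`.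
An eigenvector `v` of `G` with `|μ| ≥ 1` would satisfy `v*Q₂v = 0` and `Kv = 0`, i.e. it would be an
unstable mode of `A` invisible through `Q₂^{1/2}`; so detectability makes `G` Schur stable. By
Gelfand's formula `Gᵏ → 0`, and `xᵀΔx ≥ (Gᵏx)ᵀΔ(Gᵏx) → 0` gives `Δ ⪰ 0`.
-/

open Filter Topology
open scoped ComplexOrder

namespace Matrix

section Complexification

variable {l m n : Type*}

lemma map_ofReal_mul [Fintype m] (M : Matrix l m ℝ) (N : Matrix m n ℝ) :
    (M * N).map Complex.ofReal = M.map Complex.ofReal * N.map Complex.ofReal :=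
  Matrix.map_mul (f := Complex.ofRealHom)

lemma map_ofReal_sub (M N : Matrix m n ℝ) :
    (M - N).map Complex.ofReal = M.map Complex.ofReal - N.map Complex.ofReal :=
  Matrix.map_sub _ Complex.ofReal_sub M N

lemma map_ofReal_pow [Fintype n] [DecidableEq n] (M : Matrix n n ℝ) (k : ℕ) :
    (M ^ k).map Complex.ofReal = M.map Complex.ofReal ^ k :=
  map_pow Complex.ofRealHom.mapMatrix M k

lemma conjTranspose_map_ofReal (M : Matrix m n ℝ) :
    (M.map Complex.ofReal)ᴴ = Mᵀ.map Complex.ofReal := by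
  ext i j; simp

lemma star_dotProduct_map_ofReal_transpose_mul_mulVec [Fintype l] [Fintype n]
    (N M : Matrix l n ℝ) (v : n → ℂ) :
    star v ⬝ᵥ ((Nᵀ * M).map Complex.ofReal *ᵥ v) =
      star (N.map Complex.ofReal *ᵥ v) ⬝ᵥ (M.map Complex.ofReal *ᵥ v) := by
  rw [map_ofReal_mul, ← mulVec_mulVec, dotProduct_mulVec, ← conjTranspose_map_ofReal,
    ← star_mulVec]

lemma star_dotProduct_transpose_mul_mul_mulVec_of_mulVec_eq_smul [Fintype n]
    {G P : Matrix n n ℝ} {μ : ℂ} {v : n → ℂ} (hv : G.map Complex.ofReal *ᵥ v = μ • v) :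
    star v ⬝ᵥ ((Gᵀ * P * G).map Complex.ofReal *ᵥ v) =
      (‖μ‖ : ℂ) ^ 2 * (star v ⬝ᵥ (P.map Complex.ofReal *ᵥ v)) := by
  rw [Matrix.mul_assoc, star_dotProduct_map_ofReal_transpose_mul_mulVec, map_ofReal_mul,
    ← mulVec_mulVec, hv, mulVec_smul, star_smul, smul_dotProduct, dotProduct_smul, smul_eq_mul,
    smul_eq_mul, ← mul_assoc, ← Complex.conj_mul']
  rfl

end Complexification

namespace PosSemidef

variable {n : Type*} [Fintype n] [DecidableEq n] {M : Matrix n n ℝ}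

lemma isHermitian_sqrt (hM : M.PosSemidef) : hM.sqrt.IsHermitian := by
  simp [IsHermitian, PosSemidef.sqrt, Matrix.mul_assoc, star_eq_conjTranspose]

lemma sqrt_mul_self (hM : M.PosSemidef) : hM.sqrt * hM.sqrt = M := by
  set U : Matrix n n ℝ := (hM.1.eigenvectorUnitary : Matrix n n ℝ)
  have hU : star U * U = 1 := Unitary.coe_star_mul_self hM.1.eigenvectorUnitary
  have hd : diagonal ((↑) ∘ (Real.sqrt ∘ hM.1.eigenvalues)) *
      diagonal ((↑) ∘ (Real.sqrt ∘ hM.1.eigenvalues)) =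
      diagonal (RCLike.ofReal ∘ hM.1.eigenvalues : n → ℝ) := by
    rw [diagonal_mul_diagonal]; congr 1; funext i
    simp [Real.mul_self_sqrt (hM.eigenvalues_nonneg i)]
  conv_rhs => rw [hM.1.spectral_theorem, Unitary.conjStarAlgAut_apply]
  rw [← hd]
  simp only [PosSemidef.sqrt, Matrix.mul_assoc]
  rw [← Matrix.mul_assoc (star U) _ _, hU, Matrix.one_mul]
  rfl

lemma transpose_sqrt_mul_sqrt (hM : M.PosSemidef) : hM.sqrtᵀ * hM.sqrt = M := by
  rw [← conjTranspose_eq_transpose_of_trivial, hM.isHermitian_sqrt.eq, hM.sqrt_mul_self]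

lemma map_ofReal (hM : M.PosSemidef) : (M.map Complex.ofReal).PosSemidef := by
  rw [← hM.transpose_sqrt_mul_sqrt, map_ofReal_mul, ← conjTranspose_map_ofReal]
  exact posSemidef_conjTranspose_mul_self _

end PosSemidef

lemma PosDef.map_ofReal {n : Type*} [Fintype n] [DecidableEq n] {M : Matrix n n ℝ}
    (hM : M.PosDef) : (M.map Complex.ofReal).PosDef := by
  refine hM.posSemidef.map_ofReal.posDef_iff_det_ne_zero.mpr ?_
  rw [show M.map Complex.ofReal = Complex.ofRealHom.mapMatrix M from rfl, ← RingHom.map_det]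
  exact Complex.ofReal_ne_zero.mpr hM.det_pos.ne'

theorem posSemidef_of_eq_transpose_mul_mul_add {ι : Type*} [Fintype ι] [DecidableEq ι]
    {G Δ M : Matrix ι ι ℝ} (hG : Tendsto (fun k : ℕ => G ^ k) atTop (𝓝 0)) (hΔ : Δ.IsHermitian)
    (hM : M.PosSemidef) (h : Δ = Gᵀ * Δ * G + M) : Δ.PosSemidef := by
  refine PosSemidef.of_dotProduct_mulVec_nonneg hΔ fun x => ?_
  rw [star_trivial]
  set f : ℕ → ℝ := fun k => (G ^ k *ᵥ x) ⬝ᵥ (Δ *ᵥ (G ^ k *ᵥ x))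
  have hstep (y : ι → ℝ) : (G *ᵥ y) ⬝ᵥ (Δ *ᵥ (G *ᵥ y)) ≤ y ⬝ᵥ (Δ *ᵥ y) := by
    have hy : y ⬝ᵥ (Δ *ᵥ y) = (G *ᵥ y) ⬝ᵥ (Δ *ᵥ (G *ᵥ y)) + y ⬝ᵥ (M *ᵥ y) := by
      conv_lhs => rw [h]
      rw [add_mulVec, dotProduct_add, Matrix.mul_assoc, ← mulVec_mulVec, dotProduct_mulVec,
        vecMul_transpose, ← mulVec_mulVec]
    have hMy : 0 ≤ y ⬝ᵥ (M *ᵥ y) := by simpa using hM.dotProduct_mulVec_nonneg y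
    linarith
  have hanti : Antitone f := antitone_nat_of_succ_le fun k => by
    simpa only [f, pow_succ', ← mulVec_mulVec] using hstep (G ^ k *ᵥ x)
  have hlim : Tendsto f atTop (𝓝 0) := by
    have hcont : Continuous fun N : Matrix ι ι ℝ => (N *ᵥ x) ⬝ᵥ (Δ *ᵥ (N *ᵥ x)) := by
      fun_prop
    have h0 := (hcont.tendsto 0).comp hG
    rwa [zero_mulVec, mulVec_zero, dotProduct_zero] at h0
  simpa [f] using hanti.le_of_tendsto hlim 0

end Matrix

theorem tendsto_pow_atTop_nhds_zero_of_spectralRadius_lt_one {𝔸 : Type*} [NormedRing 𝔸]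
    [NormedAlgebra ℂ 𝔸] [CompleteSpace 𝔸] {a : 𝔸} (ha : spectralRadius ℂ a < 1) :
    Tendsto (fun k : ℕ => a ^ k) atTop (𝓝 0) := by
  obtain ⟨c, hac, hc1⟩ := ENNReal.lt_iff_exists_nnreal_btwn.mp ha
  have hc1 : (c : ℝ) < 1 := by exact_mod_cast hc1
  have hbound : ∀ᶠ k : ℕ in atTop, ‖a ^ k‖ ≤ (c : ℝ) ^ k := by
    filter_upwards [(spectrum.gelfand_formula a).eventually_lt_const hac, eventually_ne_atTop 0]
      with k hk hk0
    rw [one_div, ENNReal.rpow_inv_lt_iff (by positivity), ENNReal.rpow_natCast] at hk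
    exact_mod_cast hk.le
  exact squeeze_zero_norm' hbound (tendsto_pow_atTop_nhds_zero_of_lt_one c.coe_nonneg hc1)

namespace SchurStable

variable {n : ℕ} [DecidableEq (Fin n)] {G : Matrix (Fin n) (Fin n) ℝ}

lemma spectralRadius_lt_one_s17 (hG : SchurStable G) :
    spectralRadius ℂ (G.map Complex.ofReal) < 1 := by
  let _ := Matrix.linftyOpNormedRing (n := Fin n) (α := ℂ)
  let _ := Matrix.linftyOpNormedAlgebra (n := Fin n) (R := ℂ) (α := ℂ)
  rcases (spectrum ℂ (G.map Complex.ofReal)).eq_empty_or_nonempty with h | h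
  · simp [spectralRadius, h]
  refine spectrum.spectralRadius_lt_of_forall_lt_of_nonempty h fun z hz => ?_
  rw [← Matrix.spectrum_toLin', ← Module.End.hasEigenvalue_iff_mem_spectrum] at hz
  obtain ⟨v, hv, hv0⟩ := hz.exists_hasEigenvector
  rw [Module.End.mem_eigenspace_iff, toLin'_apply] at hv
  exact_mod_cast hG z ⟨v, hv0, hv⟩

theorem tendsto_pow_atTop_nhds_zero (hG : SchurStable G) :
    Tendsto (fun k : ℕ => G ^ k) atTop (𝓝 0) := by
  let _ := Matrix.linftyOpNormedRing (n := Fin n) (α := ℂ)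
  let _ := Matrix.linftyOpNormedAlgebra (n := Fin n) (R := ℂ) (α := ℂ)
  have h := tendsto_pow_atTop_nhds_zero_of_spectralRadius_lt_one hG.spectralRadius_lt_one_s17
  have hre := ((continuous_id.matrix_map Complex.continuous_re).tendsto 0).comp h
  simpa [Function.comp_def, ← map_ofReal_pow, Matrix.map_map] using hre

end SchurStable

section Riccati

variable {n m : Type*} [Fintype n] [Fintype m] [DecidableEq m] {α : Type*} [CommRing α]

noncomputable def riccatiGain (A : Matrix n n α) (B : Matrix n m α) (R : Matrix m m α)
    (P : Matrix n n α) : Matrix m n α :=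
  (R + Bᵀ * P * B)⁻¹ * (Bᵀ * P * A)

theorem riccati_eq_closedLoop {A : Matrix n n α} {B : Matrix n m α} {R : Matrix m m α}
    {P Q : Matrix n n α} (hR : R.IsSymm) (hP : P.IsSymm) (hS : IsUnit (R + Bᵀ * P * B).det)
    (heq : P = Q + Aᵀ * P * A - Aᵀ * P * B * (R + Bᵀ * P * B)⁻¹ * Bᵀ * P * A)
    (K : Matrix m n α) :
    P = Q + Kᵀ * R * K + (A - B * K)ᵀ * P * (A - B * K)
      - (K - riccatiGain A B R P)ᵀ * (R + Bᵀ * P * B) * (K - riccatiGain A B R P) := by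
  unfold riccatiGain
  rw [Matrix.mul_assoc Bᵀ] at hS heq ⊢
  set S := R + Bᵀ * (P * B)
  have hST : Sᵀ = S := by simp [S, hR.eq, hP.eq, Matrix.mul_assoc]
  have cancel_left (X : Matrix m n α) : S⁻¹ * (S * X) = X := nonsing_inv_mul_cancel_left _ _ hS
  have cancel_right (X : Matrix m n α) : S * (S⁻¹ * X) = X := mul_nonsing_inv_cancel_left _ _ hS
  nth_rewrite 1 [heq]
  simp only [Matrix.mul_assoc, transpose_sub, transpose_mul, transpose_nonsing_inv,
    transpose_transpose, hST, hP.eq, Matrix.mul_sub, Matrix.sub_mul, cancel_left, cancel_right]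
  simp only [S, Matrix.add_mul, Matrix.mul_add, Matrix.mul_assoc]
  abel

end Riccati

theorem schurStable_sub_mul_of_detectable {n m : ℕ} [DecidableEq (Fin n)] [DecidableEq (Fin m)]
    {A : Matrix (Fin n) (Fin n) ℝ} {B : Matrix (Fin n) (Fin m) ℝ} {R : Matrix (Fin m) (Fin m) ℝ}
    {Q P : Matrix (Fin n) (Fin n) ℝ} {K : Matrix (Fin m) (Fin n) ℝ}
    (hR : R.PosDef) (hQ : Q.PosSemidef) (hP : P.PosSemidef) (hdet : Detectable A hQ.sqrt)
    (hlyap : P = Q + Kᵀ * R * K + (A - B * K)ᵀ * P * (A - B * K)) :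
    SchurStable (A - B * K) := by
  rintro μ ⟨v, hv0, hv⟩
  by_contra! hμ
  set qf : Matrix (Fin n) (Fin n) ℝ → ℂ := fun M => star v ⬝ᵥ (M.map Complex.ofReal *ᵥ v)
  have hqf_add (M N) : qf (M + N) = qf M + qf N := by
    simp only [qf, Matrix.map_add _ Complex.ofReal_add, add_mulVec, dotProduct_add]
  have hP0 : 0 ≤ qf P := hP.map_ofReal.dotProduct_mulVec_nonneg v
  have hQ0 : 0 ≤ qf Q := hQ.map_ofReal.dotProduct_mulVec_nonneg v
  have hKRK : qf (Kᵀ * R * K) = star (K.map Complex.ofReal *ᵥ v) ⬝ᵥ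
      (R.map Complex.ofReal *ᵥ (K.map Complex.ofReal *ᵥ v)) := by
    simp only [qf, Matrix.mul_assoc, star_dotProduct_map_ofReal_transpose_mul_mulVec,
      map_ofReal_mul, mulVec_mulVec]
  have hKRK0 : 0 ≤ qf (Kᵀ * R * K) :=
    hKRK ▸ hR.posSemidef.map_ofReal.dotProduct_mulVec_nonneg _
  have hsum : qf Q + qf (Kᵀ * R * K) = -(((‖μ‖ ^ 2 - 1 : ℝ) : ℂ) * qf P) := by
    have h := congrArg qf hlyap
    rw [hqf_add, hqf_add, show qf ((A - B * K)ᵀ * P * (A - B * K)) = _ from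
      star_dotProduct_transpose_mul_mul_mulVec_of_mulVec_eq_smul hv] at h
    push_cast
    linear_combination -h
  have hsum0 : qf Q + qf (Kᵀ * R * K) ≤ 0 := by
    rw [hsum, neg_nonpos]
    refine mul_nonneg ?_ hP0
    rw [Complex.zero_le_real, sub_nonneg]
    exact one_le_pow₀ hμ
  obtain ⟨hQv, hKRKv⟩ := (add_eq_zero_iff_of_nonneg hQ0 hKRK0).mp
    (le_antisymm hsum0 (add_nonneg hQ0 hKRK0))
  have hKv : K.map Complex.ofReal *ᵥ v = 0 := by
    by_contra hKv
    exact (hR.map_ofReal.dotProduct_mulVec_pos hKv).ne' (hKRK ▸ hKRKv)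
  have hAv : A.map Complex.ofReal *ᵥ v = μ • v := by
    rwa [map_ofReal_sub, map_ofReal_mul, sub_mulVec, ← mulVec_mulVec, hKv, mulVec_zero,
      sub_zero] at hv
  refine hdet μ v hv0 hAv hμ (dotProduct_star_self_eq_zero.mp ?_)
  rw [← star_dotProduct_map_ofReal_transpose_mul_mulVec, hQ.transpose_sqrt_mul_sqrt]
  exact hQv

theorem stmt17_general {n m : ℕ} [DecidableEq (Fin n)] (A : Matrix (Fin n) (Fin n) ℝ)
    (B : Matrix (Fin n) (Fin m) ℝ) (R : Matrix (Fin m) (Fin m) ℝ)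
    (Q₁ Q₂ P₁ P₂ : Matrix (Fin n) (Fin n) ℝ)
    (hR : R.PosDef) (hQ2 : Q₂.PosSemidef)
    (hQ12 : (Q₂ - Q₁).PosSemidef)
    (hdet2 : Detectable A hQ2.sqrt)
    (hP1 : P₁.PosSemidef) (hP2 : P₂.PosSemidef)
    (heq1 : P₁ = Q₁ + Aᵀ * P₁ * A - Aᵀ * P₁ * B * (R + Bᵀ * P₁ * B)⁻¹ * Bᵀ * P₁ * A)
    (heq2 : P₂ = Q₂ + Aᵀ * P₂ * A - Aᵀ * P₂ * B * (R + Bᵀ * P₂ * B)⁻¹ * Bᵀ * P₂ * A) :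
    (P₂ - P₁).PosSemidef := by
  have hS₁ : (R + Bᵀ * P₁ * B).PosDef :=
    hR.add_posSemidef (by simpa using hP1.conjTranspose_mul_mul_same B)
  have hS₂ : (R + Bᵀ * P₂ * B).PosDef :=
    hR.add_posSemidef (by simpa using hP2.conjTranspose_mul_mul_same B)
  set K := riccatiGain A B R P₂
  have hlyap₂ := riccati_eq_closedLoop (isHermitian_iff_isSymm.mp hR.1)
    (isHermitian_iff_isSymm.mp hP2.1) hS₂.det_pos.ne'.isUnit heq2 K
  rw [sub_self, transpose_zero, Matrix.zero_mul, Matrix.zero_mul, sub_zero] at hlyap₂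
  have hlyap₁ := riccati_eq_closedLoop (isHermitian_iff_isSymm.mp hR.1)
    (isHermitian_iff_isSymm.mp hP1.1) hS₁.det_pos.ne'.isUnit heq1 K
  set K₁ := riccatiGain A B R P₁
  have hΔ : P₂ - P₁ = (A - B * K)ᵀ * (P₂ - P₁) * (A - B * K)
      + ((Q₂ - Q₁) + (K - K₁)ᵀ * (R + Bᵀ * P₁ * B) * (K - K₁)) := by
    rw [Matrix.mul_sub (A - B * K)ᵀ, Matrix.sub_mul]
    conv_lhs => rw [hlyap₂, hlyap₁]
    abel
  have hstable := schurStable_sub_mul_of_detectable hR hQ2 hP2 hdet2 hlyap₂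
  refine posSemidef_of_eq_transpose_mul_mul_add hstable.tendsto_pow_atTop_nhds_zero
    (hP2.1.sub hP1.1) (hQ12.add ?_) hΔ
  simpa using hS₁.posSemidef.conjTranspose_mul_mul_same (K - K₁)

theorem stmt17 {n m : ℕ} [DecidableEq (Fin n)] (A : Matrix (Fin n) (Fin n) ℝ)
    (B : Matrix (Fin n) (Fin m) ℝ) (R : Matrix (Fin m) (Fin m) ℝ)
    (Q₁ Q₂ P₁ P₂ : Matrix (Fin n) (Fin n) ℝ)
    (hR : R.PosDef) (hQ1 : Q₁.PosSemidef) (hQ2 : Q₂.PosSemidef)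
    (hQ12 : (Q₂ - Q₁).PosSemidef)
    (hdet1 : Detectable A hQ1.sqrt) (hdet2 : Detectable A hQ2.sqrt)
    (hstab : Stabilizable A B)
    (hP1 : P₁.PosSemidef) (hP2 : P₂.PosSemidef)
    (heq1 : P₁ = Q₁ + Aᵀ * P₁ * A - Aᵀ * P₁ * B * (R + Bᵀ * P₁ * B)⁻¹ * Bᵀ * P₁ * A)
    (heq2 : P₂ = Q₂ + Aᵀ * P₂ * A - Aᵀ * P₂ * B * (R + Bᵀ * P₂ * B)⁻¹ * Bᵀ * P₂ * A) :
    (P₂ - P₁).PosSemidef :=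
  stmt17_general A B R Q₁ Q₂ P₁ P₂ hR hQ2 hQ12 hdet2 hP1 hP2 heq1 heq2
end
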